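/- arXiv:1111.4233 — 2 statements merged into one kernel-verified Lean document; each statement's English description precedes it below -/
import Mathlib

section
/- Let (U_n)_{n≥1} be an i.i.d. sequence with values in a set E, let {E_1,…,E_m} be a partition of E, and let X be a Poisson random variable of parameter λ independent of (U_n). For i = 1,…,m set X_i = #{ n ≤ X : U_n ∈ E_i }. Then X_1,…,X_m are independent Poisson random variables with E[X_i] = λ · P(U_1 ∈ E_i). -/
/-
Colour each point by the index of the cell of the partition containing it; the colours
`c(U_n)` are i.i.d. with law `p_i = P(U_0 ∈ E_i)`. Conditionally on `X = N`, the colour counts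
are multinomial: a colour sequence with counts `k` has probability `∏ p_i ^ k_i`, and there are
`N! / ∏ k_i!` of them (the orbit of one such sequence under `Perm (Fin N)`, whose stabiliser is
`∏ Perm (fibre)`). Since `X` is independent of the colours and the counts add up to `X`,
`P(counts = k) = e^{-λ} λ^N / N! · N! / ∏ k_i! · ∏ p_i ^ k_i = ∏ e^{-λ p_i} (λ p_i)^{k_i} / k_i!`,
because `∑ p_i = 1`. So the joint law of the counts is the product of the Poisson laws.
-/

open MeasureTheory ProbabilityTheory Finset
open scoped NNReal ENNReal

section Multinomial

open Equiv

theorem exists_perm_comp_eq_of_card_fiber_eq {α ι : Type*} [Fintype α] [DecidableEq ι]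
    {c c' : α → ι} (h : ∀ i, #{a | c a = i} = #{a | c' a = i}) :
    ∃ σ : Perm α, c' ∘ σ = c := by
  have hcard i : Fintype.card {a // c a = i} = Fintype.card {a // c' a = i} := by
    simp only [Fintype.card_subtype, h]
  refine ⟨((sigmaFiberEquiv c).symm.trans
    ((sigmaCongrRight fun i => Fintype.equivOfCardEq (hcard i)).trans (sigmaFiberEquiv c'))),
    funext fun a => ?_⟩
  exact (Fintype.equivOfCardEq (hcard (c a)) ⟨a, rfl⟩).2

theorem card_fiber_comp_perm {α ι : Type*} [Fintype α] [DecidableEq ι] (f : α → ι) (σ : Perm α)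
    (i : ι) : #{a | (f ∘ σ) a = i} = #{a | f a = i} :=
  card_equiv σ (by simp)

theorem card_fiber_card_eq_eq_multinomial {α ι : Type*} [Fintype α] [DecidableEq α] [Fintype ι]
    [DecidableEq ι] (f : α → ι) :
    #{c : α → ι | ∀ i, #{a | c a = i} = #{a | f a = i}} =
      Nat.multinomial univ fun i => #{a | f a = i} := by
  have horbit : MulAction.orbit (Perm α)ᵈᵐᵃ f =
      ↑({c : α → ι | ∀ i, #{a | c a = i} = #{a | f a = i}} : Finset _) := by
    ext c
    simp only [MulAction.mem_orbit_iff, coe_filter, mem_univ, true_and, Set.mem_ofPred_eq]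
    constructor
    · rintro ⟨σ, rfl⟩ i
      exact card_fiber_comp_perm f (DomMulAct.mk.symm σ) i
    · intro h
      obtain ⟨σ, hσ⟩ := exists_perm_comp_eq_of_card_fiber_eq h
      exact ⟨DomMulAct.mk σ, funext fun a => congrFun hσ a⟩
  have hstab :
      Nat.card (MulAction.stabilizer (Perm α)ᵈᵐᵃ f) = ∏ i, (#{a | f a = i}).factorial := by
    rw [Nat.card_congr (subtypeEquiv (q := fun σ : Perm α => f ∘ σ = f) DomMulAct.mk.symm
        fun _ => DomMulAct.mem_stabilizer_iff),
      Nat.card_eq_fintype_card, DomMulAct.stabilizer_card]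
    simp only [Fintype.card_subtype]
  have hgroup : Nat.card (Perm α)ᵈᵐᵃ = (∑ i, #{a | f a = i}).factorial := by
    rw [Nat.card_congr DomMulAct.mk.symm, Nat.card_perm, Nat.card_eq_fintype_card, ← card_univ,
      card_eq_sum_card_fiberwise (fun a _ => mem_univ (f a))]
  have := (MulAction.stabilizer (Perm α)ᵈᵐᵃ f).card_mul_index
  rw [MulAction.index_stabilizer, horbit, Set.ncard_coe_finset, hstab, hgroup,
    ← Nat.multinomial_spec] at this
  exact Nat.eq_of_mul_eq_mul_left (prod_pos fun i _ => Nat.factorial_pos _) this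

theorem exists_card_fiber_eq {α ι : Type*} [Fintype α] [Fintype ι] [DecidableEq ι] {k : ι → ℕ}
    (hk : ∑ i, k i = Fintype.card α) : ∃ f : α → ι, ∀ i, #{a | f a = i} = k i := by
  let e : α ≃ Σ i, Fin (k i) := Fintype.equivOfCardEq (by simp [hk])
  refine ⟨fun a => (e a).1, fun i => ?_⟩
  rw [← Fintype.card_subtype, Fintype.card_congr
    ((e.subtypeEquivOfSubtype (p := fun x => x.1 = i)).trans (sigmaSubtype i)), Fintype.card_fin]

end Multinomial

theorem card_filter_range_eq_card_filter_fin (N : ℕ) (p : ℕ → Prop) [DecidablePred p] :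
    #{n ∈ range N | p n} = #{n : Fin N | p n} := by
  rw [← Nat.Iio_eq_range, ← Fin.map_valEmbedding_univ, filter_map, card_map]
  rfl

theorem sum_card_filter_range_eq {ι : Type*} [Fintype ι] [DecidableEq ι] (N : ℕ) (u : ℕ → ι) :
    ∑ i, #{n ∈ range N | u n = i} = N := by
  rw [← card_eq_sum_card_fiberwise fun n _ => mem_univ (u n), card_range]

theorem card_filter_range_eq_iff {ι : Type*} [Fintype ι] [DecidableEq ι] {M : ℕ} {u : ℕ → ι}
    {k : ι → ℕ} :
    (fun i => #{n ∈ range M | u n = i}) = k ↔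
      M = ∑ i, k i ∧ ∀ i, #{n ∈ range (∑ i, k i) | u n = i} = k i := by
  constructor
  · rintro rfl
    rw [sum_card_filter_range_eq]
    exact ⟨rfl, fun _ => rfl⟩
  · rintro ⟨rfl, h⟩
    exact funext h

theorem measure_card_fiber_eq_eq_multinomial_mul {Ω ι : Type*} [MeasurableSpace Ω]
    {P : Measure Ω} [Fintype ι] [DecidableEq ι] [MeasurableSpace ι] [MeasurableSingletonClass ι]
    {N : ℕ} {V : Fin N → Ω → ι} (hV : ∀ n, Measurable (V n)) (hindep : iIndepFun V P)
    {p : ι → ℝ≥0∞} (hp : ∀ n i, P (V n ⁻¹' {i}) = p i) {k : ι → ℕ} (hk : ∑ i, k i = N) :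
    P {ω | ∀ i, #{n | V n ω = i} = k i} = Nat.multinomial univ k * ∏ i, p i ^ k i := by
  obtain ⟨f, rfl⟩ : ∃ f : Fin N → ι, (fun i => #{n | f n = i}) = k :=
    (exists_card_fiber_eq (by rw [hk, Fintype.card_fin])).imp fun _ => funext
  have hevent : {ω | ∀ i, #{n | V n ω = i} = #{n | f n = i}} =
      ⋃ c ∈ ({c | ∀ i, #{n | c n = i} = #{n | f n = i}} : Finset (Fin N → ι)),
        ⋂ n, V n ⁻¹' {c n} := by
    ext ω
    simp only [Set.mem_ofPred_eq, mem_filter, mem_univ, true_and, Set.mem_iUnion, Set.mem_iInter,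
      Set.mem_preimage, Set.mem_singleton_iff, exists_prop]
    refine ⟨fun h => ⟨_, h, fun _ => rfl⟩, ?_⟩
    rintro ⟨c, hc, hcV⟩
    simpa only [hcV] using hc
  have hpath (c : Fin N → ι) (hc : ∀ i, #{n | c n = i} = #{n | f n = i}) :
      P (⋂ n, V n ⁻¹' {c n}) = ∏ i, p i ^ #{n | f n = i} := by
    calc P (⋂ n, V n ⁻¹' {c n}) = ∏ n, p (c n) := by
          simpa [hp] using hindep.measure_inter_preimage_eq_mul univ (sets := fun n => {c n})
            fun n _ => measurableSet_singleton _
      _ = ∏ i, p i ^ #{n | f n = i} := by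
          simp only [← prod_fiberwise' univ c p, prod_const, hc]
  rw [hevent, measure_biUnion_finset, sum_congr rfl fun c hc => hpath c (mem_filter.1 hc).2,
    sum_const, nsmul_eq_mul, card_fiber_card_eq_eq_multinomial]
  · intro c _ c' _ hcc'
    obtain ⟨n, hn⟩ := Function.ne_iff.1 hcc'
    exact Set.disjoint_left.2 fun ω h h' =>
      hn ((Set.mem_iInter.1 h n).symm.trans (Set.mem_iInter.1 h' n))
  · exact fun c _ => .iInter fun n => hV n (measurableSet_singleton _)

theorem poissonMeasure_singleton_sum_mul_multinomial {ι : Type*} [Fintype ι] (r : ℝ≥0)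
    {q : ι → ℝ≥0} (hq : ∑ i, q i = 1) (k : ι → ℕ) :
    poissonMeasure r {∑ i, k i} * (Nat.multinomial univ k * ∏ i, (q i : ℝ≥0∞) ^ k i) =
      ∏ i, poissonMeasure (r * q i) {k i} := by
  have hreal : Real.exp (-r) * r ^ (∑ i, k i) / (∑ i, k i).factorial *
        (Nat.multinomial univ k * ∏ i, (q i : ℝ) ^ k i) =
      ∏ i, Real.exp (-(r * q i : ℝ≥0)) * (r * q i : ℝ≥0) ^ k i / (k i).factorial := by
    have hexp : ∏ i, Real.exp (-(r * q i : ℝ≥0)) = Real.exp (-r) := by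
      rw [← Real.exp_sum, sum_neg_distrib, ← NNReal.coe_sum, ← mul_sum, hq, mul_one]
    have hfact : ((∑ i, k i).factorial : ℝ) =
        (∏ i, ((k i).factorial : ℝ)) * Nat.multinomial univ k := by
      exact_mod_cast (Nat.multinomial_spec univ k).symm
    rw [prod_div_distrib, prod_mul_distrib, hexp, hfact]
    simp only [NNReal.coe_mul, mul_pow, prod_mul_distrib, prod_pow_eq_pow_sum]
    have hfact_ne (i : ι) : ((k i).factorial : ℝ) ≠ 0 := by positivity
    have hmult_ne : (Nat.multinomial univ k : ℝ) ≠ 0 := by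
      have := Nat.multinomial_pos univ k
      positivity
    field_simp
  simp only [poissonMeasure_singleton]
  rw [← ENNReal.ofReal_prod_of_nonneg (fun i _ => by positivity), ← hreal,
    ENNReal.ofReal_mul (by positivity), ENNReal.ofReal_mul (by positivity),
    ENNReal.ofReal_prod_of_nonneg (fun i _ => by positivity), ENNReal.ofReal_natCast]
  simp [ENNReal.ofReal_pow]

section Thinning

variable {Ω ι : Type*} [MeasurableSpace Ω] {P : Measure Ω} [Fintype ι] [DecidableEq ι]
  [MeasurableSpace ι] [MeasurableSingletonClass ι] {V : ℕ → Ω → ι} {X : Ω → ℕ}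

theorem measurable_card_filter_range (hV : ∀ n, Measurable (V n)) (hX : Measurable X) :
    Measurable fun ω i => #{n ∈ range (X ω) | V n ω = i} := by
  have hN (N : ℕ) : Measurable fun ω i => #{n ∈ range N | V n ω = i} := by
    simp only [card_filter_range_eq_card_filter_fin]
    exact (measurable_of_countable fun (w : Fin N → ι) i => #{n | w n = i}).comp
      (measurable_pi_lambda _ fun n => hV n)
  exact (measurable_from_prod_countable_right
    (f := fun q : ℕ × Ω => fun i => #{n ∈ range q.1 | V n q.2 = i}) hN).comp
    (hX.prodMk measurable_id)

theorem map_card_filter_range_eq_pi_poissonMeasure [IsProbabilityMeasure P]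
    (hV : ∀ n, Measurable (V n)) (hindep : iIndepFun V P)
    (hident : ∀ n, IdentDistrib (V n) (V 0) P P) {r : ℝ≥0} (hX : Measurable X)
    (hXlaw : P.map X = poissonMeasure r) (hXV : IndepFun X (fun ω n => V n ω) P) :
    P.map (fun ω i => #{n ∈ range (X ω) | V n ω = i}) =
      Measure.pi fun i => poissonMeasure (r * (P (V 0 ⁻¹' {i})).toNNReal) := by
  have hp_sum : ∑ i, (P (V 0 ⁻¹' {i})).toNNReal = 1 := by
    rw [← ENNReal.toNNReal_sum fun i _ => measure_ne_top P _, sum_measure_preimage_singleton _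
      fun i _ => hV 0 (measurableSet_singleton i), coe_univ, Set.preimage_univ, measure_univ,
      ENNReal.toNNReal_one]
  refine Measure.ext_of_singleton fun k => ?_
  set N := ∑ i, k i
  -- the counts add up to `X`, so on `{counts = k}` the random length `X` is the constant `N`
  have hevent : (fun ω i => #{n ∈ range (X ω) | V n ω = i}) ⁻¹' {k} =
      X ⁻¹' {N} ∩ (fun ω n => V n ω) ⁻¹' {u | ∀ i, #{n ∈ range N | u n = i} = k i} := by
    ext ω
    exact card_filter_range_eq_iff
  have hA : MeasurableSet {u : ℕ → ι | ∀ i, #{n ∈ range N | u n = i} = k i} := by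
    simp only [card_filter_range_eq_card_filter_fin]
    exact (measurable_pi_lambda (fun (u : ℕ → ι) (n : Fin N) => u n)
      fun n => measurable_pi_apply n.val)
      (Set.to_countable {w : Fin N → ι | ∀ i, #{n | w n = i} = k i}).measurableSet
  rw [Measure.map_apply (measurable_card_filter_range hV hX) (measurableSet_singleton k), hevent,
    hXV.measure_inter_preimage_eq_mul _ _ (measurableSet_singleton N) hA,
    ← Measure.map_apply hX (measurableSet_singleton _), hXlaw, Set.preimage_ofPred_eq]
  simp only [card_filter_range_eq_card_filter_fin]
  rw [measure_card_fiber_eq_eq_multinomial_mul (fun n => hV n) (hindep.precomp Fin.val_injective)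
      (fun n i => (hident n).measure_mem_eq (measurableSet_singleton i)) rfl]
  have hcoe : ∏ i, P (V 0 ⁻¹' {i}) ^ k i = ∏ i, ((P (V 0 ⁻¹' {i})).toNNReal : ℝ≥0∞) ^ k i := by
    simp only [ENNReal.coe_toNNReal (measure_ne_top P _)]
  rw [hcoe, poissonMeasure_singleton_sum_mul_multinomial r hp_sum, ← Set.univ_pi_singleton,
    Measure.pi_pi]

end Thinning

section Pi

variable {Ω ι : Type*} [MeasurableSpace Ω] {P : Measure Ω} [Fintype ι]
  {β : ι → Type*} [∀ i, MeasurableSpace (β i)] {μ : ∀ i, Measure (β i)}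
  [∀ i, IsProbabilityMeasure (μ i)] {Y : ∀ i, Ω → β i}

theorem map_eq_of_map_fun_eq_pi (hY : Measurable fun ω i => Y i ω)
    (h : P.map (fun ω i => Y i ω) = Measure.pi μ) (i : ι) : P.map (Y i) = μ i := by
  rw [← (measurePreserving_eval μ i).map_eq, ← h, Measure.map_map (measurable_pi_apply i) hY]
  rfl

theorem iIndepFun_of_map_fun_eq_pi [IsProbabilityMeasure P] (hY : Measurable fun ω i => Y i ω)
    (h : P.map (fun ω i => Y i ω) = Measure.pi μ) : iIndepFun Y P := by
  rw [iIndepFun_iff_map_fun_eq_pi_map fun i => (measurable_pi_iff.1 hY i).aemeasurable, h]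
  exact congrArg Measure.pi (funext fun i => (map_eq_of_map_fun_eq_pi hY h i).symm)

end Pi

theorem exists_eq_iff_mem_of_pairwise_disjoint {E ι : Type*} {Es : ι → Set E}
    (hdisj : Pairwise (Function.onFun Disjoint Es)) (hcover : ⋃ i, Es i = Set.univ) :
    ∃ c : E → ι, ∀ e i, c e = i ↔ e ∈ Es i := by
  choose c hc using fun e => Set.mem_iUnion.1 (hcover ▸ Set.mem_univ e)
  refine ⟨c, fun e i => ⟨fun h => h ▸ hc e, fun he => ?_⟩⟩
  by_contra hne
  exact Set.disjoint_left.1 (hdisj hne) (hc e) he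

/-- Lemma `lem-obvious`, Poisson thinning: if `(U_n)` is an i.i.d.
sequence with values in `E`, `E_1, …, E_m` is a partition of `E`, and `X` is a Poisson
random variable of parameter `λ` independent of `(U_n)`, then the counts
`X_i = #{n ≤ X : U_n ∈ E_i}` are independent Poisson random variables with
`E[X_i] = λ · P(U_1 ∈ E_i)`. -/
theorem poisson_thinning
    {Ω : Type*} [MeasurableSpace Ω] (P : Measure Ω) [IsProbabilityMeasure P]
    {E : Type*} [MeasurableSpace E] (m : ℕ) (Es : Fin m → Set E)
    (hEmeas : ∀ i, MeasurableSet (Es i))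
    (hEdisj : Pairwise (Function.onFun Disjoint Es))
    (hEcover : (⋃ i, Es i) = Set.univ)
    (U : ℕ → Ω → E) (hUmeas : ∀ n, Measurable (U n))
    (hUindep : iIndepFun U P)
    (hUident : ∀ n, IdentDistrib (U n) (U 0) P P)
    (lam : ℝ≥0) (X : Ω → ℕ) (hXmeas : Measurable X)
    (hXpoisson : Measure.map X P = poissonMeasure lam)
    (hXindep : IndepFun X (fun ω => fun n => U n ω) P) :
    iIndepFun
      (fun (i : Fin m) ω => ({n | n < X ω ∧ U n ω ∈ Es i}.ncard)) P ∧
    ∀ i : Fin m,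
      Measure.map (fun ω => ({n | n < X ω ∧ U n ω ∈ Es i}.ncard)) P =
        poissonMeasure (lam * (P (U 0 ⁻¹' Es i)).toNNReal) := by
  obtain ⟨c, hc⟩ := exists_eq_iff_mem_of_pairwise_disjoint hEdisj hEcover
  have hcm : Measurable c := measurable_to_countable' fun i =>
    (Set.ext fun e => hc e i : c ⁻¹' {i} = Es i) ▸ hEmeas i
  have hcount (i : Fin m) (ω : Ω) :
      {n | n < X ω ∧ U n ω ∈ Es i}.ncard = #{n ∈ range (X ω) | (c ∘ U n) ω = i} := by
    rw [← Set.ncard_coe_finset]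
    congr 1
    ext n
    simp [hc]
  have hpreimage (i : Fin m) : U 0 ⁻¹' Es i = (c ∘ U 0) ⁻¹' {i} := by
    ext e
    simp [hc]
  have hV (n : ℕ) : Measurable (c ∘ U n) := hcm.comp (hUmeas n)
  have hlaw := map_card_filter_range_eq_pi_poissonMeasure hV (hUindep.comp _ fun _ => hcm)
    (fun n => (hUident n).comp hcm) hXmeas hXpoisson
    (hXindep.comp measurable_id (measurable_pi_lambda _ fun n => hcm.comp (measurable_pi_apply n)))
  simp only [← hpreimage] at hlaw
  have hY := measurable_card_filter_range hV hXmeas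
  simp only [hcount]
  exact ⟨iIndepFun_of_map_fun_eq_pi hY hlaw, map_eq_of_map_fun_eq_pi hY hlaw⟩
end

section
/- For every d ≥ 2 there is a constant c = c(d) such that for every z ∈ Z^d \ {0}, every H ≥ 1, and every integer m ≥ cH, the internal DLA cluster A(∅, mδ_z) built from m independent simple random walks all started at z satisfies P( A(∅, mδ_z) ∩ 𝔹^c(0, ‖z‖+H) ≠ ∅ ) ≥ exp( −c H² ). (A scenario realizing this forces ⌈cH⌉ of the walks to settle successively along a nearest-neighbour path of length ≤ cH normal to the sphere of radius ‖z‖ at z, which has probability at least (1/2d)^{1+2+…+⌈cH⌉}.) -/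
open MeasureTheory ProbabilityTheory Filter

noncomputable section

abbrev Zd (d : ℕ) := Fin d → ℤ

/-- Euclidean norm of a lattice point. -/
def eNorm {d : ℕ} (z : Zd d) : ℝ := Real.sqrt (∑ i, ((z i : ℝ)) ^ 2)

/-- Lattice ball `𝔹(x,r) = B(x,r) ∩ ℤ^d`. -/
def lball {d : ℕ} (x : Zd d) (r : ℝ) : Set (Zd d) := {y | eNorm (y - x) < r}

/-- `b(n) = |𝔹(0,n)|`. -/
def bvol (d : ℕ) (r : ℝ) : ℕ := (lball (0 : Zd d) r).ncard

/-- A vector of euclidean length one (a step of the simple random walk). -/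
def IsUnitStep {d : ℕ} (v : Zd d) : Prop := ∑ i, (v i) ^ 2 = 1

/-- `S` is a simple random walk on `ℤ^d` started at `x`, characterized through its
finite-dimensional distributions: every admissible nearest-neighbour path of length `t`
starting at `x` has probability `(1/(2d))^t`. -/
def IsSRW {d : ℕ} {Ω : Type*} [MeasurableSpace Ω] (P : Measure Ω)
    (x : Zd d) (S : ℕ → Ω → Zd d) : Prop :=
  (∀ t, Measurable (S t)) ∧
  ∀ (t : ℕ) (p : ℕ → Zd d), p 0 = x → (∀ s < t, IsUnitStep (p (s + 1) - p s)) →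
    P {ω | ∀ s ≤ t, S s ω = p s} = ENNReal.ofReal ((1 / (2 * (d : ℝ))) ^ t)

/-- The internal DLA cluster with initial explored region `Λ`, built from the
trajectories `w 0, w 1, …` (trajectory `w k` includes its starting point `w k 0`):
the `k`-th explorer settles at the first site of its trajectory outside the
current cluster. -/
def idla {d : ℕ} (Λ : Set (Zd d)) (w : ℕ → ℕ → Zd d) : ℕ → Set (Zd d)
  | 0 => Λ
  | k + 1 => idla Λ w k ∪ {w k (sInf {t | w k t ∉ idla Λ w k})}

/-- Inner error `δ_I(n)`. -/
def innerErr (d : ℕ) (w : ℕ → ℕ → Zd d) (n : ℕ) : ℝ :=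
  n - sSup {r : ℝ | 0 ≤ r ∧ lball 0 r ⊆ idla ∅ w (bvol d n)}

/-- Outer error `δ_O(n)`. -/
def outerErr (d : ℕ) (w : ℕ → ℕ → Zd d) (n : ℕ) : ℝ :=
  sInf {r : ℝ | 0 ≤ r ∧ idla ∅ w (bvol d n) ⊆ lball 0 r} - n

/-- The walks `W 0, W 1, …` are independent simple random walks all started at `x`. -/
def IIDWalks {d : ℕ} {Ω : Type*} [MeasurableSpace Ω] (P : Measure Ω)
    (x : Zd d) (W : ℕ → ℕ → Ω → Zd d) : Prop :=
  (∀ k, IsSRW P x (W k)) ∧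
  iIndepFun (fun k ω t => W k t ω) P

/-! For `n = ⌈√d H⌉`, consider the event that, for every `k ≤ n`, the `k`-th walk makes its
first `k` steps along a fixed straight lattice path from `z`, namely along the coordinate axis
where `|zᵢ|` is largest, pointing away from `0`. By independence this event has probability
`(2d)^{-(0 + 1 + ⋯ + n)} ≥ exp(-O(H²))`. On it the `k`-th walk settles at the `k`-th point of
the path, so the cluster contains the path's `n`-th point, and moving along that axis
increases the Euclidean norm by at least `1/√d` per step, so this point has norm at least
`‖z‖ + H`. -/

open Real

lemma norm_add_mul_le_norm_add_smul {E : Type*} [NormedAddCommGroup E] [InnerProductSpace ℝ E]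
    {a e : E} {r t : ℝ} (he : ‖e‖ = 1) (hr₀ : 0 ≤ r) (hr₁ : r ≤ 1) (ht : 0 ≤ t)
    (hae : r * ‖a‖ ≤ inner ℝ a e) : ‖a‖ + r * t ≤ ‖a + t • e‖ := by
  have hsq : ‖a + t • e‖ ^ 2 = ‖a‖ ^ 2 + 2 * t * inner ℝ a e + t ^ 2 := by
    rw [norm_add_sq_real, inner_smul_right, norm_smul, he, Real.norm_of_nonneg ht]
    ring
  refine (pow_le_pow_iff_left₀ (by positivity) (norm_nonneg _) two_ne_zero).1 ?_
  rw [hsq]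
  have : r ^ 2 ≤ 1 := pow_le_one₀ hr₀ hr₁
  nlinarith [norm_nonneg a, mul_le_mul_of_nonneg_left hae ht]

namespace Zd

variable {d : ℕ}

def toEuclidean (y : Zd d) : EuclideanSpace ℝ (Fin d) := WithLp.toLp 2 fun i => (y i : ℝ)

lemma eNorm_eq_norm_toEuclidean (y : Zd d) : eNorm y = ‖toEuclidean y‖ := by
  simp [eNorm, toEuclidean, EuclideanSpace.norm_eq]

lemma toEuclidean_add_zsmul (y v : Zd d) (n : ℤ) :
    toEuclidean (y + n • v) = toEuclidean y + (n : ℝ) • toEuclidean v := by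
  ext i
  simp [toEuclidean]

lemma inner_toEuclidean (y v : Zd d) :
    inner ℝ (toEuclidean y) (toEuclidean v) = ∑ i, (y i : ℝ) * v i := by
  simp [toEuclidean, PiLp.inner_apply, mul_comm]

lemma IsUnitStep.norm_toEuclidean {v : Zd d} (hv : IsUnitStep v) : ‖toEuclidean v‖ = 1 := by
  rw [← eNorm_eq_norm_toEuclidean, eNorm]
  exact_mod_cast (congrArg (fun n : ℤ => √(n : ℝ)) hv).trans (by simp)

lemma IsUnitStep.ne_zero {v : Zd d} (hv : IsUnitStep v) : v ≠ 0 := by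
  rintro rfl
  simp [IsUnitStep] at hv

lemma norm_toEuclidean_le_sqrt_mul {y : Zd d} {i : Fin d} (hi : ∀ j, |y j| ≤ |y i|) :
    ‖toEuclidean y‖ ≤ √d * |(y i : ℝ)| := by
  rw [← eNorm_eq_norm_toEuclidean, eNorm, ← sqrt_sq (abs_nonneg (y i : ℝ)),
    ← sqrt_mul d.cast_nonneg]
  refine sqrt_le_sqrt ?_
  calc ∑ j, (y j : ℝ) ^ 2 ≤ ∑ _j : Fin d, (y i : ℝ) ^ 2 :=
        Finset.sum_le_sum fun j _ => sq_le_sq.2 (by exact_mod_cast hi j)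
    _ = d * |(y i : ℝ)| ^ 2 := by simp

lemma exists_isUnitStep_inner_ge [NeZero d] (y : Zd d) : ∃ v : Zd d, IsUnitStep v ∧
    (√d)⁻¹ * ‖toEuclidean y‖ ≤ inner ℝ (toEuclidean y) (toEuclidean v) := by
  obtain ⟨i, -, hi⟩ := Finset.exists_max_image Finset.univ (fun j => |y j|) Finset.univ_nonempty
  have hsign : ∃ σ : ℤ, σ ^ 2 = 1 ∧ (y i : ℝ) * σ = |(y i : ℝ)| := by
    rcases le_or_gt 0 (y i) with h | h
    · exact ⟨1, by norm_num, by simp [abs_of_nonneg (Int.cast_nonneg h)]⟩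
    · exact ⟨-1, by norm_num, by simp [abs_of_neg (Int.cast_lt_zero.2 h)]⟩
  obtain ⟨σ, hσ, hyσ⟩ := hsign
  refine ⟨Pi.single i σ, ?_, ?_⟩
  · rw [IsUnitStep, Finset.sum_eq_single i (fun j _ hj => by simp [hj]) (by simp),
      Pi.single_eq_same, hσ]
  · rw [inner_toEuclidean, Finset.sum_eq_single i (fun j _ hj => by simp [hj]) (by simp),
      Pi.single_eq_same, hyσ, inv_mul_le_iff₀ (sqrt_pos.2 (by exact_mod_cast NeZero.pos d))]
    exact norm_toEuclidean_le_sqrt_mul fun j => hi j (Finset.mem_univ j)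

lemma exists_outward_path [NeZero d] (z : Zd d) :
    ∃ p : ℕ → Zd d, p 0 = z ∧ Function.Injective p ∧ (∀ s, IsUnitStep (p (s + 1) - p s)) ∧
      ∀ n : ℕ, eNorm z + n / √d ≤ eNorm (p n) := by
  obtain ⟨v, hv, hzv⟩ := exists_isUnitStep_inner_ge z
  refine ⟨fun s => z + (s : ℤ) • v, by simp, ?_, fun s => ?_, fun n => ?_⟩
  · exact (add_right_injective z).comp
      ((smul_left_injective ℤ (IsUnitStep.ne_zero hv)).comp Nat.cast_injective)
  · convert hv using 1
    push_cast
    module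
  · have hd : 1 ≤ √d := one_le_sqrt.2 (by exact_mod_cast NeZero.one_le)
    rw [eNorm_eq_norm_toEuclidean, eNorm_eq_norm_toEuclidean, toEuclidean_add_zsmul,
      Int.cast_natCast, div_eq_inv_mul]
    exact norm_add_mul_le_norm_add_smul (IsUnitStep.norm_toEuclidean hv) (by positivity)
      (inv_le_one_of_one_le₀ hd) n.cast_nonneg hzv

end Zd

section Idla

variable {d : ℕ}

lemma idla_mono (Λ : Set (Zd d)) (w : ℕ → ℕ → Zd d) : Monotone (idla Λ w) :=
  monotone_nat_of_le_succ fun _ => Set.subset_union_left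

lemma idla_empty_eq_image_Iio {p : ℕ → Zd d} (hp : Function.Injective p) {w : ℕ → ℕ → Zd d}
    {K : ℕ} (hw : ∀ k < K, ∀ s ≤ k, w k s = p s) : ∀ k ≤ K, idla ∅ w k = p '' Set.Iio k
  | 0, _ => by simp [idla]
  | k + 1, hk => by
    have hwk := hw k hk
    have hcluster := idla_empty_eq_image_Iio hp hw k (by omega)
    have hsettle : sInf {t | w k t ∉ idla ∅ w k} = k := by
      refine IsLeast.csInf_eq ⟨?_, fun t ht => not_lt.1 fun hlt => ht ?_⟩
      · simpa [hcluster, hwk k le_rfl, hp.eq_iff] using fun j (hj : j < k) => hj.ne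
      · rw [hcluster, hwk t hlt.le]
        exact Set.mem_image_of_mem p hlt
    rw [idla, hsettle, hcluster, hwk k le_rfl, Set.Iio_add_one_eq_Iic, ← Set.Iio_insert,
      Set.image_insert_eq, Set.union_singleton]

lemma mem_idla_of_follow_path {p : ℕ → Zd d} (hp : Function.Injective p) {w : ℕ → ℕ → Zd d}
    {k m : ℕ} (hkm : k < m) (hw : ∀ j ≤ k, ∀ s ≤ j, w j s = p s) : p k ∈ idla ∅ w m :=
  idla_mono ∅ w hkm <| by
    rw [idla_empty_eq_image_Iio hp (fun j hj => hw j (Nat.lt_succ_iff.1 hj)) (k + 1) le_rfl]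
    exact Set.mem_image_of_mem p (Nat.lt_succ_self k)

end Idla

section Walks

variable {d : ℕ} {Ω : Type*} [MeasurableSpace Ω] {P : Measure Ω} {z : Zd d}
  {W : ℕ → ℕ → Ω → Zd d}

lemma IIDWalks.measure_follow_path (hW : IIDWalks P z W) {p : ℕ → Zd d} (hp₀ : p 0 = z)
    (hp : ∀ s, IsUnitStep (p (s + 1) - p s)) (n : ℕ) :
    P {ω | ∀ k ≤ n, ∀ s ≤ k, W k s ω = p s} =
      ENNReal.ofReal ((1 / (2 * (d : ℝ))) ^ ∑ k ∈ Finset.range (n + 1), k) := by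
  set follows : ℕ → Set (ℕ → Zd d) := fun k => {f | ∀ s ≤ k, f s = p s}
  have hmeas (k : ℕ) : MeasurableSet (follows k) := by
    simp only [follows, Set.ofPred_forall]
    exact .iInter fun s => .iInter fun _ =>
      measurableSet_eq_fun (measurable_pi_apply s) measurable_const
  have hevent : {ω | ∀ k ≤ n, ∀ s ≤ k, W k s ω = p s} =
      ⋂ k ∈ Finset.range (n + 1), (fun ω t => W k t ω) ⁻¹' follows k := by
    ext ω
    simp [follows]
  have hfactor (k : ℕ) : P ((fun ω t => W k t ω) ⁻¹' follows k) =
      ENNReal.ofReal ((1 / (2 * (d : ℝ))) ^ k) :=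
    (hW.1 k).2 k p hp₀ fun s _ => hp s
  rw [hevent, hW.2.measure_inter_preimage_eq_mul _ fun k _ => hmeas k,
    Finset.prod_congr rfl fun k _ => hfactor k,
    ← ENNReal.ofReal_prod_of_nonneg fun k _ => by positivity, Finset.prod_pow_eq_pow_sum]

lemma IIDWalks.ofReal_le_measure_idla_not_subset_lball (hW : IIDWalks P z W)
    {p : ℕ → Zd d} (hp₀ : p 0 = z) (hp_inj : Function.Injective p)
    (hp : ∀ s, IsUnitStep (p (s + 1) - p s)) {n m : ℕ} (hnm : n < m) {r : ℝ}
    (htip : p n ∉ lball 0 r) :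
    ENNReal.ofReal ((1 / (2 * (d : ℝ))) ^ ∑ k ∈ Finset.range (n + 1), k) ≤
      P {ω | (idla ∅ (fun k t => W k t ω) m ∩ (lball 0 r)ᶜ).Nonempty} := by
  rw [← hW.measure_follow_path hp₀ hp n]
  exact measure_mono fun ω hω =>
    Set.nonempty_of_mem (Set.mem_inter (mem_idla_of_follow_path hp_inj hnm hω) htip)

end Walks

lemma cast_sum_range_id_mul_le {n : ℕ} {a L : ℝ} (hn : (n : ℝ) ≤ a) (hL : 0 ≤ L) :
    ((∑ k ∈ Finset.range n, k : ℕ) : ℝ) * L ≤ a ^ 2 * L := by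
  have hsum : ∑ k ∈ Finset.range n, k ≤ n ^ 2 := by
    simpa [sq] using Finset.sum_le_card_nsmul (Finset.range n) id n fun k hk =>
      (Finset.mem_range.1 hk).le
  have : ((∑ k ∈ Finset.range n, k : ℕ) : ℝ) ≤ a ^ 2 :=
    (Nat.cast_le.2 hsum).trans (by push_cast; gcongr)
  exact mul_le_mul_of_nonneg_right this hL

lemma exp_neg_le_one_div_pow {q x : ℝ} {N : ℕ} (hq : 0 < q) (h : N * log q ≤ x) :
    exp (-x) ≤ (1 / q) ^ N := by
  rw [one_div, inv_pow, ← exp_log (pow_pos hq N), ← exp_neg, exp_le_exp, log_pow]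
  linarith

lemma one_le_log_two_mul {d : ℝ} (hd : 2 ≤ d) : 1 ≤ log (2 * d) := by
  rw [le_log_iff_exp_le (by positivity)]
  linarith [exp_one_lt_d9]

/-- tentacle-building, Step 2: for every `d ≥ 2` there is `c = c(d)`
such that for every `z ≠ 0`, every `H ≥ 1` and every integer `m ≥ cH`, the internal DLA
cluster built from `m` independent simple random walks started at `z` protrudes out of
`𝔹(0, ‖z‖ + H)` with probability at least `exp(−cH²)`. -/
theorem idla_tentacle_probability_lower_bound (d : ℕ) (hd : 2 ≤ d) :
    ∃ c : ℝ, 0 < c ∧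
      ∀ (Ω : Type) [MeasurableSpace Ω] (P : Measure Ω) [IsProbabilityMeasure P]
        (z : Zd d) (W : ℕ → ℕ → Ω → Zd d), IIDWalks P z W → z ≠ 0 →
        ∀ H : ℝ, 1 ≤ H → ∀ m : ℕ, c * H ≤ (m : ℝ) →
          ENNReal.ofReal (Real.exp (-c * H ^ 2)) ≤
            P {ω | (idla ∅ (fun k t => W k t ω) m ∩ (lball 0 (eNorm z + H))ᶜ).Nonempty} := by
  have : NeZero d := ⟨by omega⟩
  have hlog := one_le_log_two_mul (d := d) (by exact_mod_cast hd)
  have hsqrt : 0 < √(d : ℝ) := sqrt_pos.2 (by exact_mod_cast NeZero.pos d)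
  set c := (√d + 2) ^ 2 * log (2 * d)
  have hc : √d + 2 ≤ c := calc
    √d + 2 ≤ (√d + 2) ^ 2 := by nlinarith
    _ ≤ c := le_mul_of_one_le_right (sq_nonneg _) hlog
  refine ⟨c, by positivity, ?_⟩
  intro Ω _ P _ z W hW _ H hH m hm
  obtain ⟨p, hp₀, hp_inj, hp, hp_out⟩ := Zd.exists_outward_path z
  set n := ⌈√d * H⌉₊
  have hn : (n + 1 : ℝ) ≤ (√d + 2) * H := by
    nlinarith [Nat.ceil_lt_add_one (by positivity : 0 ≤ √d * H)]
  have hnm : n < m := by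
    have : (n + 1 : ℝ) ≤ m := by nlinarith
    exact_mod_cast this
  have htip : p n ∉ lball 0 (eNorm z + H) := by
    have : H ≤ n / √d := (le_div_iff₀ hsqrt).2 (by nlinarith [Nat.le_ceil (√d * H)])
    simpa [lball] using by linarith [hp_out n]
  have hexponent : ((∑ k ∈ Finset.range (n + 1), k : ℕ) : ℝ) * log (2 * d) ≤ c * H ^ 2 :=
    (cast_sum_range_id_mul_le (by exact_mod_cast hn) (by positivity)).trans_eq (by ring)
  rw [neg_mul]
  exact (ENNReal.ofReal_le_ofReal (exp_neg_le_one_div_pow (by positivity) hexponent)).trans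
    (hW.ofReal_le_measure_idla_not_subset_lball hp₀ hp_inj hp hnm htip)
end
end
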